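/- arXiv:2604.07660 — 7 statements merged into one kernel-verified Lean document; each statement's English description precedes it below -/
import Mathlib

section
/- For r ≥ 1 and x ≥ 2(r−1) with x > 0, the upper incomplete Gamma function satisfies Γ(r, x) = ∫_x^∞ u^{r−1} e^{−u} du ≤ 2 x^{r−1} e^{−x}. -/
open MeasureTheory Real

/-- For `r ≥ 1` and `x ≥ 2(r−1)` with `x > 0`, the upper incomplete Gamma function
satisfies `Γ(r, x) = ∫_x^∞ u^{r−1} e^{−u} du ≤ 2 x^{r−1} e^{−x}`. -/
theorem stmt0 (r x : ℝ) (hr : 1 ≤ r) (hx : 2 * (r - 1) ≤ x) (hx0 : 0 < x) :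
    ∫ u in Set.Ioi x, u ^ (r - 1) * Real.exp (-u) ≤ 2 * x ^ (r - 1) * Real.exp (-x) := by
  set C : ℝ := x ^ (r - 1) * Real.exp (-x) * Real.exp (x / 2) with hC
  have hg : IntegrableOn (fun u : ℝ => C * Real.exp (-((1:ℝ)/2) * u)) (Set.Ioi x) :=
    (exp_neg_integrableOn_Ioi x one_half_pos).const_mul C
  have key : ∀ u ∈ Set.Ioi x, u ^ (r - 1) * Real.exp (-u) ≤ C * Real.exp (-((1:ℝ)/2) * u) := by
    intro u hu
    have hux : x < u := hu
    have hu0 : 0 < u := hx0.trans hux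
    have hdiv : 0 < u / x := div_pos hu0 hx0
    have h1 : u ^ (r - 1) = x ^ (r - 1) * (u / x) ^ (r - 1) := by
      rw [← Real.mul_rpow hx0.le hdiv.le, mul_div_cancel₀ _ hx0.ne']
    have hlog : Real.log (u / x) ≤ (u - x) / x := by
      have := Real.log_le_sub_one_of_pos hdiv
      calc Real.log (u / x) ≤ u / x - 1 := this
        _ = (u - x) / x := by field_simp
    have h2 : (u / x) ^ (r - 1) ≤ Real.exp ((u - x) / 2) := by
      rw [Real.rpow_def_of_pos hdiv]
      apply Real.exp_le_exp.mpr
      calc Real.log (u / x) * (r - 1) ≤ (u - x) / x * (r - 1) := by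
            apply mul_le_mul_of_nonneg_right hlog (by linarith)
        _ ≤ (u - x) / 2 := by
            rw [div_mul_eq_mul_div, div_le_div_iff₀ hx0 two_pos]
            have h3 : (u - x) * (2 * (r - 1)) ≤ (u - x) * x :=
              mul_le_mul_of_nonneg_left hx (by linarith)
            linarith [h3]
    have hxpow : (0:ℝ) ≤ x ^ (r - 1) := Real.rpow_nonneg hx0.le _
    calc u ^ (r - 1) * Real.exp (-u)
        = x ^ (r - 1) * ((u / x) ^ (r - 1) * Real.exp (-u)) := by rw [h1]; ring
      _ ≤ x ^ (r - 1) * (Real.exp ((u - x) / 2) * Real.exp (-u)) := by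
          apply mul_le_mul_of_nonneg_left
            (mul_le_mul_of_nonneg_right h2 (Real.exp_pos _).le) hxpow
      _ = C * Real.exp (-((1:ℝ)/2) * u) := by
          rw [hC, ← Real.exp_add, mul_assoc, mul_assoc, ← Real.exp_add, ← Real.exp_add]
          ring_nf
  have hmono : ∫ u in Set.Ioi x, u ^ (r - 1) * Real.exp (-u)
      ≤ ∫ u in Set.Ioi x, C * Real.exp (-((1:ℝ)/2) * u) := by
    apply integral_mono_of_nonneg
    · filter_upwards [ae_restrict_mem measurableSet_Ioi] with u hu
      have hu0 : 0 < u := hx0.trans hu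
      positivity
    · exact hg
    · filter_upwards [ae_restrict_mem measurableSet_Ioi] with u hu using key u hu
  have hint : ∫ u in Set.Ioi x, C * Real.exp (-((1:ℝ)/2) * u)
      = 2 * x ^ (r - 1) * Real.exp (-x) := by
    rw [MeasureTheory.integral_const_mul]
    have : ∫ u in Set.Ioi x, Real.exp (-((1:ℝ)/2) * u)
        = ((1:ℝ)/2)⁻¹ • ∫ u in Set.Ioi ((1:ℝ)/2 * x), Real.exp (-u) := by
      have := MeasureTheory.integral_comp_mul_left_Ioi (fun u => Real.exp (-u)) x
        (one_half_pos (α := ℝ))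
      simpa [neg_mul] using this
    rw [this, integral_exp_neg_Ioi]
    rw [hC]
    rw [smul_eq_mul]
    rw [show -((1:ℝ)/2 * x) = -x + x/2 by ring, Real.exp_add, ← Real.exp_add]
    have h4 : Real.exp (x*(1/2)) * Real.exp (x*(-1/2)) = 1 := by
      rw [← Real.exp_add]; norm_num
    ring_nf
    linear_combination 2 * (x ^ (-1+r) * Real.exp (-x)) * h4
  rw [hint] at hmono
  exact hmono
end

section
/- For every d ∈ ℕ and real r > 1, the number of lattice points n ∈ ℤ_{≥0}^d with ∏_{j=1}^d (1 + n_j) < r, denoted a(d, r), satisfies a(d, r) ≍_d r (log r)^{d−1}; that is, there exist constants c_1(d), c_2(d) > 0 such that c_1(d) r (log r)^{d−1} ≤ a(d, r) ≤ c_2(d) r (log r)^{d−1} for all sufficiently large r. -/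
open Real Finset

/-!
Splitting off the first coordinate `m = n₀` gives the recursion
`a(d+1, r) = ∑_{m < r} a(d, r/(1+m))`, and the harmonic sum `∑_{m < x} 1/(1+m)` lies between
`log x` and `1 + log x`. For the upper bound every term is estimated by the induction hypothesis
with `log (r/(1+m)) ≤ log r`, and summing costs one factor `1 + log r`. For the lower bound only
the terms with `1 + m ≤ √r` are kept: for those `r/(1+m) ≥ √r`, so each logarithm is at least
`log √r = (log r)/2`, and summing gains a factor `log √r`.
-/

lemma one_le_prod_one_add {d : ℕ} (n : Fin d → ℕ) : (1 : ℝ) ≤ ∏ j, (1 + (n j : ℝ)) :=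
  one_le_prod fun _ _ => le_add_of_nonneg_right (Nat.cast_nonneg _)

noncomputable def hyperbolicCross : (d : ℕ) → ℝ → Finset (Fin d → ℕ)
  | 0, r => if 1 < r then {Fin.elim0} else ∅
  | d + 1, r =>
    (range ⌈r⌉₊).biUnion fun m => (hyperbolicCross d (r / (1 + m))).image (Fin.cons m)

theorem mem_hyperbolicCross {d : ℕ} {r : ℝ} {n : Fin d → ℕ} :
    n ∈ hyperbolicCross d r ↔ ∏ j, (1 + (n j : ℝ)) < r := by
  induction d generalizing r with
  | zero => simp only [hyperbolicCross, Subsingleton.elim n Fin.elim0]; split_ifs <;> simp [*]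
  | succ d ih =>
    simp only [hyperbolicCross, mem_biUnion, mem_range, mem_image, Fin.prod_univ_succ]
    constructor
    · rintro ⟨m, -, y, hy, rfl⟩
      rw [ih, lt_div_iff₀' (by positivity)] at hy
      simpa using hy
    · intro hn
      have hn₀ : (n 0 : ℝ) < r := by
        nlinarith [one_le_prod_one_add fun i => n i.succ, (n 0).cast_nonneg (α := ℝ)]
      refine ⟨n 0, Nat.lt_ceil.mpr hn₀, Fin.tail n, ?_, Fin.cons_self_tail n⟩
      rwa [ih, lt_div_iff₀' (by positivity)]

theorem coe_hyperbolicCross (d : ℕ) (r : ℝ) :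
    (hyperbolicCross d r : Set (Fin d → ℕ)) = {n | ∏ j, (1 + (n j : ℝ)) < r} :=
  Set.ext fun _ => mem_hyperbolicCross

theorem hyperbolicCross_eq_empty {d : ℕ} {r : ℝ} (hr : r ≤ 1) : hyperbolicCross d r = ∅ :=
  eq_empty_of_forall_notMem fun n hn =>
    (mem_hyperbolicCross.mp hn).not_ge (hr.trans (one_le_prod_one_add n))

theorem card_hyperbolicCross_zero_le_one (r : ℝ) : (hyperbolicCross 0 r).card ≤ 1 := by
  unfold hyperbolicCross; split_ifs <;> simp

theorem card_hyperbolicCross_succ (d : ℕ) (r : ℝ) :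
    (hyperbolicCross (d + 1) r).card =
      ∑ m ∈ range ⌈r⌉₊, (hyperbolicCross d (r / (1 + m))).card := by
  rw [hyperbolicCross, card_biUnion]
  · exact sum_congr rfl fun m _ =>
      card_image_of_injective _ (Fin.cons_right_injective (α := fun _ => ℕ) m)
  · intro m _ m' _ hm
    simp only [Function.onFun, disjoint_left, mem_image]
    rintro _ ⟨y, -, rfl⟩ ⟨y', -, h⟩
    exact hm (by simpa using (congrFun h 0).symm)

theorem sum_card_le_card_hyperbolicCross_succ {d M : ℕ} {r : ℝ} (hM : M ≤ ⌈r⌉₊) :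
    ∑ m ∈ range M, ((hyperbolicCross d (r / (1 + m))).card : ℝ) ≤
      (hyperbolicCross (d + 1) r).card := by
  rw [card_hyperbolicCross_succ, Nat.cast_sum]
  exact sum_le_sum_of_subset_of_nonneg (range_subset_range.mpr hM) fun _ _ _ => by positivity

theorem sum_range_inv_one_add_eq_harmonic (N : ℕ) :
    ∑ m ∈ range N, (1 + (m : ℝ))⁻¹ = harmonic N := by
  simp [harmonic, add_comm]

theorem sum_range_ceil_inv_one_add_le {r : ℝ} (hr : 1 ≤ r) :
    ∑ m ∈ range ⌈r⌉₊, (1 + (m : ℝ))⁻¹ ≤ 2 * (1 + log r) := by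
  have hceil : (⌈r⌉₊ : ℝ) ≤ 2 * r := Nat.ceil_le_two_mul (by linarith)
  have hlog : log ⌈r⌉₊ ≤ log 2 + log r := by
    rw [← log_mul two_ne_zero (by positivity)]
    exact log_le_log (Nat.cast_pos.mpr (Nat.ceil_pos.mpr (by linarith))) hceil
  rw [sum_range_inv_one_add_eq_harmonic]
  linarith [harmonic_le_one_add_log ⌈r⌉₊, log_two_lt_d9, log_nonneg hr]

theorem log_le_sum_range_floor_inv_one_add {x : ℝ} (hx : 0 < x) :
    log x ≤ ∑ m ∈ range ⌊x⌋₊, (1 + (m : ℝ))⁻¹ := by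
  rw [sum_range_inv_one_add_eq_harmonic]
  refine le_trans (log_le_log hx ?_) (log_add_one_le_harmonic _)
  push_cast
  exact (Nat.lt_floor_add_one x).le

theorem card_hyperbolicCross_succ_le (k : ℕ) {r : ℝ} (hr : 1 ≤ r) :
    ((hyperbolicCross (k + 1) r).card : ℝ) ≤ 2 ^ (k + 1) * r * (1 + log r) ^ k := by
  induction k generalizing r with
  | zero =>
    have hcard : (hyperbolicCross 1 r).card ≤ ⌈r⌉₊ := by
      rw [card_hyperbolicCross_succ]
      simpa using sum_le_card_nsmul (range ⌈r⌉₊) _ 1 fun _ _ => card_hyperbolicCross_zero_le_one _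
    simpa using (Nat.cast_le (α := ℝ).mpr hcard).trans (Nat.ceil_le_two_mul (by linarith))
  | succ k ih =>
    have hterm : ∀ m : ℕ, ((hyperbolicCross (k + 1) (r / (1 + m))).card : ℝ) ≤
        2 ^ (k + 1) * (1 + log r) ^ k * r * (1 + (m : ℝ))⁻¹ := by
      intro m
      rcases le_or_gt (r / (1 + m)) 1 with hle | hlt
      · simp only [hyperbolicCross_eq_empty hle, card_empty, Nat.cast_zero]
        have : 0 ≤ 1 + log r := by linarith [log_nonneg hr]
        positivity
      · calc _ ≤ 2 ^ (k + 1) * (r / (1 + m)) * (1 + log (r / (1 + m))) ^ k := ih hlt.le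
          _ ≤ 2 ^ (k + 1) * (r / (1 + m)) * (1 + log r) ^ k := by
              have := log_nonneg hlt.le
              gcongr
              exact div_le_self (by linarith) (by simp)
          _ = _ := by ring
    calc ((hyperbolicCross (k + 2) r).card : ℝ)
        = ∑ m ∈ range ⌈r⌉₊, ((hyperbolicCross (k + 1) (r / (1 + m))).card : ℝ) := by
          rw [card_hyperbolicCross_succ, Nat.cast_sum]
      _ ≤ ∑ m ∈ range ⌈r⌉₊, 2 ^ (k + 1) * (1 + log r) ^ k * r * (1 + (m : ℝ))⁻¹ :=
          sum_le_sum fun m _ => hterm m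
      _ = 2 ^ (k + 1) * (1 + log r) ^ k * r * ∑ m ∈ range ⌈r⌉₊, (1 + (m : ℝ))⁻¹ := by
          rw [mul_sum]
      _ ≤ 2 ^ (k + 1) * (1 + log r) ^ k * r * (2 * (1 + log r)) := by
          have : 0 ≤ 1 + log r := by linarith [log_nonneg hr]
          gcongr
          exact sum_range_ceil_inv_one_add_le hr
      _ = 2 ^ (k + 2) * r * (1 + log r) ^ (k + 1) := by ring

theorem exists_le_card_hyperbolicCross_succ (k : ℕ) :
    ∃ c > 0, ∃ R ≥ 1, ∀ r ≥ R, c * r * log r ^ k ≤ (hyperbolicCross (k + 1) r).card := by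
  induction k with
  | zero =>
    refine ⟨1 / 2, by norm_num, 2, by norm_num, fun r hr => ?_⟩
    have hterm : ∀ m ∈ range ⌈r - 1⌉₊,
        (1 : ℝ) ≤ (hyperbolicCross 0 (r / (1 + m))).card := by
      intro m hm
      have hmr : (m : ℝ) < r - 1 := Nat.lt_ceil.mp (mem_range.mp hm)
      rw [Nat.one_le_cast, one_le_card]
      refine ⟨Fin.elim0, mem_hyperbolicCross.mpr ?_⟩
      rw [Fin.prod_univ_zero, one_lt_div (by positivity)]
      linarith
    calc 1 / 2 * r * log r ^ 0 ≤ r - 1 := by linarith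
      _ ≤ ∑ m ∈ range ⌈r - 1⌉₊, (1 : ℝ) := by simpa using Nat.le_ceil (r - 1)
      _ ≤ ∑ m ∈ range ⌈r - 1⌉₊, ((hyperbolicCross 0 (r / (1 + m))).card : ℝ) :=
          sum_le_sum hterm
      _ ≤ _ := sum_card_le_card_hyperbolicCross_succ (Nat.ceil_mono (by linarith))
  | succ k ih =>
    obtain ⟨c, hc, R, hR, hbound⟩ := ih
    refine ⟨c / 2 ^ (k + 1), by positivity, R ^ 2, one_le_pow₀ hR, fun r hr => ?_⟩
    have hRs : R ≤ √r := le_sqrt_of_sq_le hr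
    have hs₁ : 1 ≤ √r := hR.trans hRs
    have hr₀ : 0 < r := by nlinarith [sq_sqrt (show 0 ≤ r by nlinarith)]
    set L := log √r with hL
    have hL₀ : 0 ≤ L := log_nonneg hs₁
    have hterm : ∀ m ∈ range ⌊√r⌋₊,
        c * L ^ k * r * (1 + (m : ℝ))⁻¹ ≤ (hyperbolicCross (k + 1) (r / (1 + m))).card := by
      intro m hm
      have hmr : 1 + (m : ℝ) ≤ √r := by
        have : (m : ℝ) + 1 ≤ ⌊√r⌋₊ := by exact_mod_cast mem_range.mp hm
        linarith [Nat.floor_le (sqrt_nonneg r)]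
      have hquot : √r ≤ r / (1 + m) := by
        rw [le_div_iff₀ (by positivity)]
        calc √r * (1 + m) ≤ √r * √r := by gcongr
          _ = r := mul_self_sqrt hr₀.le
      calc c * L ^ k * r * (1 + (m : ℝ))⁻¹ = c * (r / (1 + m)) * L ^ k := by ring
        _ ≤ c * (r / (1 + m)) * log (r / (1 + m)) ^ k := by
            gcongr
            exact log_le_log (by positivity) hquot
        _ ≤ _ := hbound _ (hRs.trans hquot)
    have hM : ⌊√r⌋₊ ≤ ⌈r⌉₊ :=
      (Nat.floor_le_floor (sqrt_le_self_iff.mpr (Or.inr (by nlinarith)))).trans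
        (Nat.floor_le_ceil r)
    calc c / 2 ^ (k + 1) * r * log r ^ (k + 1) = c * L ^ k * r * L := by
          rw [hL, log_sqrt hr₀.le, div_pow]; field_simp; ring
      _ ≤ c * L ^ k * r * ∑ m ∈ range ⌊√r⌋₊, (1 + (m : ℝ))⁻¹ := by
          gcongr
          exact log_le_sum_range_floor_inv_one_add (by positivity)
      _ = ∑ m ∈ range ⌊√r⌋₊, c * L ^ k * r * (1 + (m : ℝ))⁻¹ := by rw [mul_sum]
      _ ≤ ∑ m ∈ range ⌊√r⌋₊, ((hyperbolicCross (k + 1) (r / (1 + m))).card : ℝ) :=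
          sum_le_sum hterm
      _ ≤ _ := sum_card_le_card_hyperbolicCross_succ hM

/-- The number `a(d,r)` of lattice points `n ∈ ℤ_{≥0}^d` with `∏_j (1+n_j) < r` satisfies
`a(d,r) ≍_d r (log r)^{d−1}` for all sufficiently large `r`. -/
theorem stmt4 (d : ℕ) (hd : 0 < d) :
    ∃ c₁ c₂ : ℝ, 0 < c₁ ∧ 0 < c₂ ∧ ∃ R : ℝ, 1 < R ∧ ∀ r : ℝ, R ≤ r →
      c₁ * r * (Real.log r) ^ (d - 1) ≤
        (Set.ncard {n : Fin d → ℕ | (∏ j, (1 + (n j : ℝ))) < r} : ℝ) ∧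
      (Set.ncard {n : Fin d → ℕ | (∏ j, (1 + (n j : ℝ))) < r} : ℝ) ≤
        c₂ * r * (Real.log r) ^ (d - 1) := by
  obtain ⟨k, rfl⟩ : ∃ k, d = k + 1 := ⟨d - 1, by omega⟩
  obtain ⟨c, hc, R, -, hlower⟩ := exists_le_card_hyperbolicCross_succ k
  refine ⟨c, 2 ^ (k + 1) * 2 ^ k, hc, by positivity, max R (exp 1),
    lt_max_of_lt_right (one_lt_exp_iff.mpr one_pos), fun r hr => ?_⟩
  have he : exp 1 ≤ r := le_of_max_le_right hr
  have hr₁ : 1 ≤ r := by linarith [add_one_le_exp (1 : ℝ)]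
  have hlog : 1 ≤ log r := (le_log_iff_exp_le (by linarith)).mpr he
  rw [← coe_hyperbolicCross, Set.ncard_coe_finset, Nat.add_sub_cancel]
  refine ⟨hlower r (le_of_max_le_left hr), ?_⟩
  calc _ ≤ 2 ^ (k + 1) * r * (1 + log r) ^ k := card_hyperbolicCross_succ_le k hr₁
    _ ≤ 2 ^ (k + 1) * r * (2 * log r) ^ k := by gcongr; linarith
    _ = _ := by ring
end

section
/- Let β ∈ (0,∞)^d, g(β) = (Σ_{j=1}^d 1/β_j)^{−1}, and for r > 0 define C(d, r, β) = |{ n ∈ ℤ^d : Σ_{j=1}^d |n_j|^{β_j} < r }|. Then C(d, r, β) ≍_{d,β} r^{1/g(β)}, i.e., there exist constants c_1, c_2 > 0 depending only on d and β with c_1 r^{1/g(β)} ≤ C(d, r, β) ≤ c_2 r^{1/g(β)} for all r ≥ 1. -/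
open Real Finset

private noncomputable def Ic (t : ℝ) : Finset ℤ := Finset.Icc (-(⌈t⌉-1)) (⌈t⌉-1)

private lemma memI (t : ℝ) (n : ℤ) : n ∈ Ic t ↔ |(n:ℝ)| < t := by
  rw [Ic, Finset.mem_Icc, ← abs_le, Int.le_sub_one_iff, Int.lt_ceil, Int.cast_abs]

private lemma cardI (t : ℝ) (ht : 0 < t) : ((Ic t).card : ℝ) = 2*(⌈t⌉:ℝ) - 1 := by
  have h1 : (0:ℤ) < ⌈t⌉ := Int.ceil_pos.mpr ht
  rw [Ic, Int.card_Icc]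
  have h2 : (⌈t⌉ - 1 + 1 - -(⌈t⌉-1)) = 2*⌈t⌉ - 1 := by ring
  rw [h2]
  have h3 : ((2*⌈t⌉-1).toNat : ℤ) = 2*⌈t⌉-1 := Int.toNat_of_nonneg (by omega)
  exact_mod_cast congrArg (fun z : ℤ => (z:ℝ)) h3

private lemma cardI_lb (t : ℝ) (ht : 0 < t) : t ≤ ((Ic t).card : ℝ) := by
  rw [cardI t ht]
  have h1 : (1:ℝ) ≤ (⌈t⌉:ℝ) := by exact_mod_cast Int.ceil_pos.mpr ht
  have h2 : t ≤ (⌈t⌉:ℝ) := Int.le_ceil t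
  linarith

private lemma cardI_ub (t : ℝ) (ht : 1 ≤ t) : ((Ic t).card : ℝ) ≤ 3*t := by
  rw [cardI t (by linarith)]
  have h1 : (⌈t⌉:ℝ) < t + 1 := Int.ceil_lt_add_one t
  linarith

/-- Lattice point count in an anisotropic ball: with `g(β) = (Σ_j 1/β_j)⁻¹`,
`C(d,r,β) = |{n ∈ ℤ^d : Σ_j |n_j|^{β_j} < r}| ≍_{d,β} r^{1/g(β)}` for `r ≥ 1`. -/
theorem stmt8 (d : ℕ) (hd : 0 < d) (β : Fin d → ℝ) (hβ : ∀ j, 0 < β j) :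
    ∃ c₁ c₂ : ℝ, 0 < c₁ ∧ 0 < c₂ ∧ ∀ r : ℝ, 1 ≤ r →
      c₁ * r ^ (∑ j, 1 / β j) ≤
        (Set.ncard {n : Fin d → ℤ | (∑ j, |(n j : ℝ)| ^ (β j)) < r} : ℝ) ∧
      (Set.ncard {n : Fin d → ℤ | (∑ j, |(n j : ℝ)| ^ (β j)) < r} : ℝ) ≤
        c₂ * r ^ (∑ j, 1 / β j) := by
  haveI : NeZero d := ⟨hd.ne'⟩
  set E := ∑ j, 1 / β j with hE
  have hEpos : 0 < E := Finset.sum_pos (fun j _ => by have := hβ j; positivity) Finset.univ_nonempty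
  have hd0 : (0:ℝ) < d := Nat.cast_pos.mpr hd
  refine ⟨((d:ℝ) ^ E)⁻¹, 3^d, by positivity, by positivity, fun r hr => ?_⟩
  have hr0 : (0:ℝ) < r := lt_of_lt_of_le one_pos hr
  have hprod : ∀ x : ℝ, 0 < x → ∏ j, x ^ (1 / β j) = x ^ E := fun x hx => by
    rw [hE, Real.rpow_sum_of_pos hx]
  set S : Set (Fin d → ℤ) := {n : Fin d → ℤ | (∑ j, |(n j : ℝ)| ^ (β j)) < r} with hS
  set U : Finset (Fin d → ℤ) := Fintype.piFinset (fun j => Ic (r ^ (1/β j))) with hU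
  set L : Finset (Fin d → ℤ) := Fintype.piFinset (fun j => Ic ((r/d) ^ (1/β j))) with hL
  have hSU : S ⊆ ↑U := by
    intro n hn
    rw [Finset.mem_coe, hU, Fintype.mem_piFinset]
    intro j
    rw [memI]
    have h1 : |(n j:ℝ)| ^ β j < r :=
      lt_of_le_of_lt (Finset.single_le_sum (f := fun i => |(n i:ℝ)| ^ β i)
        (fun i _ => Real.rpow_nonneg (abs_nonneg _) _) (Finset.mem_univ j)) hn
    calc |(n j:ℝ)| = (|(n j:ℝ)| ^ β j) ^ (1/β j) := by
          rw [← Real.rpow_mul (abs_nonneg _), mul_one_div, div_self (hβ j).ne', Real.rpow_one]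
      _ < r ^ (1/β j) := Real.rpow_lt_rpow (Real.rpow_nonneg (abs_nonneg _) _) h1
          (by have := hβ j; positivity)
  have hfin : S.Finite := Set.Finite.subset U.finite_toSet hSU
  have hLS : ↑L ⊆ S := by
    intro n hn
    rw [Finset.mem_coe, hL, Fintype.mem_piFinset] at hn
    show (∑ j, |(n j : ℝ)| ^ (β j)) < r
    calc ∑ j, |(n j : ℝ)| ^ (β j) < ∑ _j : Fin d, r/d := by
          refine Finset.sum_lt_sum_of_nonempty Finset.univ_nonempty (fun j _ => ?_)
          have h1 := (memI _ _).mp (hn j)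
          calc |(n j:ℝ)| ^ β j < ((r/d) ^ (1/β j)) ^ β j :=
                Real.rpow_lt_rpow (abs_nonneg _) h1 (hβ j)
            _ = r/d := by
                rw [← Real.rpow_mul (by positivity), one_div_mul_cancel (hβ j).ne',
                  Real.rpow_one]
      _ = r := by
          rw [Finset.sum_const, Finset.card_univ, Fintype.card_fin, nsmul_eq_mul]
          field_simp
  constructor
  · calc ((d:ℝ) ^ E)⁻¹ * r ^ E = (r/d) ^ E := by
          rw [Real.div_rpow hr0.le hd0.le, inv_mul_eq_div]
      _ = ∏ j, (r/d) ^ (1/β j) := (hprod _ (by positivity)).symm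
      _ ≤ ∏ j, ((Ic ((r/d) ^ (1/β j))).card : ℝ) := by
          refine Finset.prod_le_prod (fun j _ => by positivity) (fun j _ => ?_)
          exact cardI_lb _ (by positivity)
      _ = (L.card : ℝ) := by rw [hL, Fintype.card_piFinset, Nat.cast_prod]
      _ ≤ (S.ncard : ℝ) := by
          rw [← Set.ncard_coe_finset L]
          exact_mod_cast Set.ncard_le_ncard hLS hfin
  · calc (S.ncard : ℝ) ≤ ((↑U : Set (Fin d → ℤ)).ncard : ℝ) := by
          exact_mod_cast Set.ncard_le_ncard hSU U.finite_toSet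
      _ = (U.card : ℝ) := by rw [Set.ncard_coe_finset]
      _ = ∏ j, ((Ic (r ^ (1/β j))).card : ℝ) := by
          rw [hU, Fintype.card_piFinset, Nat.cast_prod]
      _ ≤ ∏ j, 3 * r ^ (1/β j) := by
          refine Finset.prod_le_prod (fun j _ => by positivity) (fun j _ => ?_)
          refine cardI_ub _ ?_
          calc (1:ℝ) = 1 ^ (1/β j) := (Real.one_rpow _).symm
            _ ≤ r ^ (1/β j) := Real.rpow_le_rpow (by norm_num) hr
                (by have := hβ j; positivity)
      _ = 3^d * r ^ E := by
          rw [Finset.prod_mul_distrib, Finset.prod_const, Finset.card_univ, Fintype.card_fin,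
            hprod r hr0]
end

section
/- Let β ∈ (0,∞)^d, g(β) = (Σ_{j=1}^d 1/β_j)^{−1}, f ∈ H^β(𝕋^d) with Fourier coefficient sequence c = (f̂_n)_{n ∈ ℤ^d}. Then for all s ∈ ℕ, σ_s(c)_2 ≲_{β,d} s^{−g(β)} ‖f‖_{H^β}, where σ_s(c)_2 is the ℓ² best s-term approximation error of c. -/
open Real Finset

lemma aux_w_pos {d : ℕ} (β : Fin d → ℝ) (n : Fin d → ℤ) :
    (1:ℝ) ≤ 1 + ∑ j, |(n j : ℝ)| ^ (β j) :=
  le_add_of_nonneg_right (Finset.sum_nonneg fun j _ =>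
    Real.rpow_nonneg (abs_nonneg _) _)

/-- Best `s`-term approximation rate in `H^β`: for Fourier coefficient sequences `c` with
finite anisotropic Sobolev norm (weights `(1 + Σ_j |n_j|^{β_j})²`) and
`g(β) = (Σ_j 1/β_j)⁻¹`, for every `s ∈ ℕ` there is a set `S` of at most `s` indices whose
complement has `ℓ²` tail `≲_{β,d} s^{−g(β)} ‖f‖_{H^β}`. -/
theorem stmt11 (d : ℕ) (hd : 0 < d) (β : Fin d → ℝ) (hβ : ∀ j, 0 < β j) :
    ∃ C : ℝ, 0 < C ∧ ∀ c : (Fin d → ℤ) → ℂ,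
      Summable (fun n => (1 + ∑ j, |(n j : ℝ)| ^ (β j)) ^ 2 * ‖c n‖ ^ 2) →
      ∀ s : ℕ, 1 ≤ s → ∃ S : Finset (Fin d → ℤ), S.card ≤ s ∧
        Real.sqrt (∑' n : {n : (Fin d → ℤ) // n ∉ S}, ‖c n.1‖ ^ 2) ≤
          C * (s : ℝ) ^ (-(∑ j, 1 / β j)⁻¹) *
            Real.sqrt (∑' n, (1 + ∑ j, |(n j : ℝ)| ^ (β j)) ^ 2 * ‖c n‖ ^ 2) := by
  have hB : (0:ℝ) < ∑ j, 1 / β j := by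
    apply Finset.sum_pos (fun j _ => by have := hβ j; positivity)
    exact Finset.univ_nonempty_iff.2 (Fin.pos_iff_nonempty.1 hd)
  set B : ℝ := ∑ j, 1 / β j with hBdef
  refine ⟨((3:ℝ) ^ d) ^ (B⁻¹ : ℝ), Real.rpow_pos_of_pos (pow_pos (by norm_num : (0:ℝ) < 3) d) _, ?_⟩
  intro c hsum s hs
  set w : (Fin d → ℤ) → ℝ := fun n => 1 + ∑ j, |(n j : ℝ)| ^ (β j) with hw
  have hw1 : ∀ n, (1:ℝ) ≤ w n := fun n => aux_w_pos β n
  have hs0 : (0:ℝ) < (s:ℝ) := by exact_mod_cast hs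
  set T : ℝ := ((s:ℝ) / 3 ^ d) ^ (B⁻¹ : ℝ) with hT
  have hT0 : 0 < T := Real.rpow_pos_of_pos (by positivity) _
  -- the box and the set S
  set M : Fin d → ℕ := fun j => ⌊T ^ (β j)⁻¹⌋₊ with hM
  set box : Finset (Fin d → ℤ) :=
    Fintype.piFinset (fun j => Finset.Icc (-(M j : ℤ)) (M j)) with hbox
  set S : Finset (Fin d → ℤ) := box.filter (fun n => w n ≤ T) with hS
  have hmem : ∀ n, w n ≤ T → n ∈ S := by
    intro n hn
    refine Finset.mem_filter.2 ⟨?_, hn⟩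
    refine Fintype.mem_piFinset.2 fun j => ?_
    have hterm : |(n j : ℝ)| ^ (β j) ≤ T := by
      have h1 : |(n j : ℝ)| ^ (β j) ≤ ∑ k, |(n k : ℝ)| ^ (β k) :=
        Finset.single_le_sum (f := fun k => |(n k : ℝ)| ^ (β k))
          (fun k _ => Real.rpow_nonneg (abs_nonneg _) _) (Finset.mem_univ j)
      have h2 : (1:ℝ) + ∑ k, |(n k : ℝ)| ^ (β k) ≤ T := hn
      nlinarith
    have habs : |(n j : ℝ)| ≤ T ^ (β j)⁻¹ := by
      have h0 : (0:ℝ) ≤ |(n j : ℝ)| := abs_nonneg _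
      have := Real.rpow_le_rpow (Real.rpow_nonneg h0 _) hterm
        (le_of_lt (inv_pos.2 (hβ j)))
      rwa [← Real.rpow_mul h0, mul_inv_cancel₀ (hβ j).ne', Real.rpow_one] at this
    have hnat : (n j).natAbs ≤ M j := by
      apply Nat.le_floor
      rw [Nat.cast_natAbs, Int.cast_abs]
      exact habs
    rw [Finset.mem_Icc]
    omega
  have hout : ∀ n, n ∉ S → T < w n := fun n hn =>
    not_le.1 fun h => hn (hmem n h)
  -- cardinality bound
  have hcard : S.card ≤ s := by
    rcases le_or_gt 1 T with hT1 | hT1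
    · have h1 : (S.card : ℝ) ≤ (box.card : ℝ) :=
        Nat.cast_le.2 (Finset.card_filter_le _ _)
      have hboxcard : (box.card : ℝ) = ∏ j, (2 * (M j : ℝ) + 1) := by
        rw [hbox, Fintype.card_piFinset]
        push_cast
        apply Finset.prod_congr rfl
        intro j _
        rw [Int.card_Icc]
        have : ((M j : ℤ) + 1 - -(M j : ℤ)).toNat = 2 * M j + 1 := by omega
        rw [this]; push_cast; ring
      have hfac : ∀ j : Fin d, (2 * (M j : ℝ) + 1) ≤ 3 * T ^ (β j)⁻¹ := by
        intro j
        have h1 : (M j : ℝ) ≤ T ^ (β j)⁻¹ := Nat.floor_le (Real.rpow_nonneg hT0.le _)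
        have h2 : (1:ℝ) ≤ T ^ (β j)⁻¹ :=
          Real.one_le_rpow hT1 (le_of_lt (inv_pos.2 (hβ j)))
        linarith
      have hprod : (∏ j, (2 * (M j : ℝ) + 1)) ≤ ∏ j, 3 * T ^ (β j)⁻¹ := by
        apply Finset.prod_le_prod
        · intro j _; positivity
        · intro j _; exact hfac j
      have hTB : T ^ (B:ℝ) = (s:ℝ) / 3 ^ d := by
        rw [hT, ← Real.rpow_mul (by positivity), inv_mul_cancel₀ hB.ne', Real.rpow_one]
      have hprodval : (∏ j, (3:ℝ) * T ^ (β j)⁻¹) = (s:ℝ) := by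
        rw [Finset.prod_mul_distrib, Finset.prod_const,
          ← Real.rpow_sum_of_pos hT0]
        have : ∑ j, (β j)⁻¹ = B := by
          rw [hBdef]; apply Finset.sum_congr rfl; intro j _; rw [one_div]
        rw [this, hTB, Finset.card_univ, Fintype.card_fin]
        field_simp
      have : (S.card : ℝ) ≤ (s:ℝ) := by
        calc (S.card : ℝ) ≤ (box.card : ℝ) := h1
        _ = ∏ j, (2 * (M j : ℝ) + 1) := hboxcard
        _ ≤ ∏ j, 3 * T ^ (β j)⁻¹ := hprod
        _ = (s:ℝ) := hprodval
      exact_mod_cast this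
    · have : S = ∅ := by
        apply Finset.eq_empty_of_forall_notMem
        intro n hn
        have := (Finset.mem_filter.1 hn).2
        have := hw1 n
        linarith
      rw [this]; simpa using hs
  refine ⟨S, hcard, ?_⟩
  -- tail bound
  set W : (Fin d → ℤ) → ℝ := fun n => (w n) ^ 2 * ‖c n‖ ^ 2 with hW
  have hWnn : ∀ n, 0 ≤ W n := fun n => by positivity
  have hcW : ∀ n, ‖c n‖ ^ 2 ≤ W n := by
    intro n
    have h1 := hw1 n
    have h2 : (0:ℝ) ≤ ‖c n‖ ^ 2 := sq_nonneg _
    show ‖c n‖ ^ 2 ≤ (w n) ^ 2 * ‖c n‖ ^ 2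
    have h3 : (1:ℝ) ≤ w n ^ 2 := by nlinarith
    nlinarith [mul_le_mul_of_nonneg_right h3 h2]
  have hsumW : Summable W := hsum
  have hsum2 : Summable (fun n => ‖c n‖ ^ 2) :=
    Summable.of_nonneg_of_le (fun n => sq_nonneg _) hcW hsumW
  have hsub : Summable (fun n : {n : (Fin d → ℤ) // n ∉ S} => ‖c n.1‖ ^ 2) :=
    hsum2.subtype _
  have hsubW : Summable (fun n : {n : (Fin d → ℤ) // n ∉ S} => W n.1) :=
    hsumW.subtype _
  have key : (∑' n : {n : (Fin d → ℤ) // n ∉ S}, ‖c n.1‖ ^ 2) ≤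
      (T⁻¹) ^ 2 * ∑' n, W n := by
    have h1 : (∑' n : {n : (Fin d → ℤ) // n ∉ S}, ‖c n.1‖ ^ 2) ≤
        ∑' n : {n : (Fin d → ℤ) // n ∉ S}, (T⁻¹) ^ 2 * W n.1 := by
      apply Summable.tsum_le_tsum _ hsub (hsubW.mul_left _)
      intro n
      have hTw : T < w n.1 := hout n.1 n.2
      have h2 : (0:ℝ) ≤ ‖c n.1‖ ^ 2 := sq_nonneg _
      have h3 : T ^ 2 ≤ (w n.1) ^ 2 := by nlinarith
      have hTinv : T ^ 2 * T⁻¹ ^ 2 = 1 := by field_simp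
      show ‖c n.1‖ ^ 2 ≤ T⁻¹ ^ 2 * ((w n.1) ^ 2 * ‖c n.1‖ ^ 2)
      calc ‖c n.1‖ ^ 2 = (T ^ 2 * T⁻¹ ^ 2) * ‖c n.1‖ ^ 2 := by rw [hTinv, one_mul]
        _ ≤ (w n.1 ^ 2 * T⁻¹ ^ 2) * ‖c n.1‖ ^ 2 := by
              apply mul_le_mul_of_nonneg_right _ h2
              exact mul_le_mul_of_nonneg_right h3 (sq_nonneg _)
        _ = T⁻¹ ^ 2 * ((w n.1) ^ 2 * ‖c n.1‖ ^ 2) := by ring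
    have h2 : (∑' n : {n : (Fin d → ℤ) // n ∉ S}, (T⁻¹) ^ 2 * W n.1) ≤
        (T⁻¹) ^ 2 * ∑' n, W n := by
      rw [tsum_mul_left]
      apply mul_le_mul_of_nonneg_left _ (by positivity)
      exact Summable.tsum_subtype_le W _ hWnn hsumW
    linarith
  have hCs : T⁻¹ = ((3:ℝ) ^ d) ^ (B⁻¹ : ℝ) * (s:ℝ) ^ (-(B⁻¹) : ℝ) := by
    rw [hT, Real.div_rpow hs0.le (by positivity), Real.rpow_neg hs0.le]
    rw [inv_div]
    rw [div_eq_mul_inv]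
  calc Real.sqrt (∑' n : {n : (Fin d → ℤ) // n ∉ S}, ‖c n.1‖ ^ 2)
      ≤ Real.sqrt ((T⁻¹) ^ 2 * ∑' n, W n) := Real.sqrt_le_sqrt key
    _ = T⁻¹ * Real.sqrt (∑' n, W n) := by
        rw [Real.sqrt_mul (sq_nonneg _), Real.sqrt_sq (by positivity)]
    _ = ((3:ℝ) ^ d) ^ (B⁻¹ : ℝ) * (s:ℝ) ^ (-(B⁻¹) : ℝ) *
        Real.sqrt (∑' n, W n) := by rw [hCs]
end

section
/- Let q > p > 0, a ≥ 0, and s ≥ max{3, e^{2aq/(q−p)}}. Then ∫_s^∞ x^{−q/p} (log x)^{aq/p} dx ≤ 2 · (p/(q−p)) · (log s)^{aq/p} · s^{1 − q/p}. -/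
/-!
On `[s, ∞)` the hypothesis makes `(c - 1) log x ≥ 2r` (with `c = q/p`, `r = aq/p`), so the integrand
`x^{-c} (log x)^r` is at most `2/(c-1)` times the derivative of `-x^{1-c} (log x)^r`, which is
`x^{-c} (log x)^{r-1} ((c-1) log x - r)`. Integrating over `(s, ∞)` gives the bound.
-/

open Real MeasureTheory Filter Set Topology

lemma hasDerivAt_rpow_mul_log_rpow (b r : ℝ) {x : ℝ} (hx : 0 < x) (hx1 : x ≠ 1) :
    HasDerivAt (fun y => y ^ b * log y ^ r)
      (x ^ (b - 1) * log x ^ (r - 1) * (b * log x + r)) x := by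
  have hlog : log x ≠ 0 := log_ne_zero_of_pos_of_ne_one hx hx1
  refine ((hasDerivAt_rpow_const (p := b) (Or.inl hx.ne')).mul
    ((hasDerivAt_rpow_const (p := r) (Or.inl hlog)).comp x (hasDerivAt_log hx.ne'))).congr_deriv ?_
  have hxb : x ^ b = x ^ (b - 1) * x := by rw [← rpow_add_one hx.ne', sub_add_cancel]
  have hLr : log x ^ r = log x ^ (r - 1) * log x := by rw [← rpow_add_one hlog, sub_add_cancel]
  rw [Function.comp_apply, hxb, hLr]
  field_simp

lemma tendsto_rpow_mul_log_rpow_atTop {b : ℝ} (hb : b < 0) (r : ℝ) :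
    Tendsto (fun x => x ^ b * log x ^ r) atTop (𝓝 0) := by
  refine (isLittleO_log_rpow_rpow_atTop r (neg_pos.2 hb)).tendsto_div_nhds_zero.congr' ?_
  filter_upwards [eventually_gt_atTop 0] with x hx
  rw [rpow_neg hx.le, div_inv_eq_mul, mul_comm]

lemma rpow_le_two_div_mul_rpow_sub_one_mul {c r L : ℝ} (hc : 1 < c) (hL : 0 < L)
    (h : 2 * r ≤ (c - 1) * L) :
    L ^ r ≤ 2 / (c - 1) * (L ^ (r - 1) * ((c - 1) * L - r)) := by
  have hLr : L ^ r = L ^ (r - 1) * L := by rw [← rpow_add_one hL.ne', sub_add_cancel]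
  have hc1 : 0 < c - 1 := by linarith
  have key : 2 / (c - 1) * (L ^ (r - 1) * ((c - 1) * L - r)) - L ^ (r - 1) * L
      = L ^ (r - 1) * ((c - 1) * L - 2 * r) / (c - 1) := by
    field_simp
    ring
  rw [hLr, ← sub_nonneg, key]
  exact div_nonneg (mul_nonneg (rpow_nonneg hL.le _) (by linarith)) hc1.le

theorem integral_Ioi_rpow_neg_mul_log_rpow_le {c r s : ℝ} (hc : 1 < c) (hs : 1 < s)
    (hrs : 2 * r ≤ (c - 1) * log s) :
    ∫ x in Ioi s, x ^ (-c) * log x ^ r ≤ 2 / (c - 1) * log s ^ r * s ^ (1 - c) := by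
  set G' : ℝ → ℝ := fun x => x ^ (-c) * (log x ^ (r - 1) * ((c - 1) * log x - r))
  have hc1 : 0 < c - 1 := by linarith
  have hIci : ∀ x ∈ Ici s, 1 < x ∧ 2 * r ≤ (c - 1) * log x := fun x hx =>
    ⟨hs.trans_le hx, hrs.trans (mul_le_mul_of_nonneg_left (log_le_log (by linarith) hx) hc1.le)⟩
  have hderiv : ∀ x ∈ Ici s, HasDerivAt (fun y => -(y ^ (1 - c) * log y ^ r)) (G' x) x := by
    intro x hx
    have hx1 := (hIci x hx).1
    refine (hasDerivAt_rpow_mul_log_rpow (1 - c) r (by linarith) hx1.ne').neg.congr_deriv ?_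
    rw [sub_sub_cancel_left]
    ring
  have hbound : ∀ x ∈ Ioi s, x ^ (-c) * log x ^ r ≤ 2 / (c - 1) * G' x := by
    intro x hx
    obtain ⟨hx1, hrx⟩ := hIci x (Ioi_subset_Ici_self hx)
    rw [mul_left_comm]
    exact mul_le_mul_of_nonneg_left
      (rpow_le_two_div_mul_rpow_sub_one_mul hc (log_pos hx1) hrx) (rpow_nonneg (by linarith) _)
  have hG'_nonneg : ∀ x ∈ Ioi s, 0 ≤ G' x := by
    intro x hx
    obtain ⟨hx1, hrx⟩ := hIci x (Ioi_subset_Ici_self hx)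
    have := mul_pos hc1 (log_pos hx1)
    exact mul_nonneg (rpow_nonneg (by linarith) _)
      (mul_nonneg (rpow_nonneg (log_pos hx1).le _) (by linarith))
  have htend : Tendsto (fun y => -(y ^ (1 - c) * log y ^ r)) atTop (𝓝 0) := by
    simpa using (tendsto_rpow_mul_log_rpow_atTop (by linarith : 1 - c < 0) r).neg
  calc ∫ x in Ioi s, x ^ (-c) * log x ^ r
      ≤ ∫ x in Ioi s, 2 / (c - 1) * G' x := by
        refine integral_mono_of_nonneg (ae_restrict_of_forall_mem measurableSet_Ioi fun x hx => ?_)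
          ((integrableOn_Ioi_deriv_of_nonneg' hderiv hG'_nonneg htend).const_mul _)
          (ae_restrict_of_forall_mem measurableSet_Ioi hbound)
        exact mul_nonneg (rpow_nonneg (by linarith [hx.out]) _)
          (rpow_nonneg (log_nonneg (by linarith [hx.out])) _)
    _ = 2 / (c - 1) * (0 - -(s ^ (1 - c) * log s ^ r)) := by
        rw [integral_const_mul, integral_Ioi_of_hasDerivAt_of_nonneg' hderiv hG'_nonneg htend]
    _ = 2 / (c - 1) * log s ^ r * s ^ (1 - c) := by ring

theorem stmt16_general (p q a : ℝ) (hp : 0 < p) (hpq : p < q)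
    (s : ℝ) (hs3 : 3 ≤ s) (hse : Real.exp (2 * a * q / (q - p)) ≤ s) :
    (∫ x in Set.Ioi s, x ^ (-(q / p)) * (Real.log x) ^ (a * q / p)) ≤
      2 * (p / (q - p)) * (Real.log s) ^ (a * q / p) * s ^ (1 - q / p) := by
  have hqp : q - p ≠ 0 := (sub_pos.2 hpq).ne'
  have hlog : 2 * a * q / (q - p) ≤ log s := (le_log_iff_exp_le (by linarith)).2 hse
  have hc : 1 < q / p := (one_lt_div hp).2 hpq
  have hrs : 2 * (a * q / p) ≤ (q / p - 1) * log s := by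
    calc 2 * (a * q / p) = (q / p - 1) * (2 * a * q / (q - p)) := by field_simp
      _ ≤ (q / p - 1) * log s := mul_le_mul_of_nonneg_left hlog (sub_nonneg.2 hc.le)
  convert integral_Ioi_rpow_neg_mul_log_rpow_le hc (by linarith) hrs using 2
  field_simp

/-- For `q > p > 0`, `a ≥ 0` and `s ≥ max{3, e^{2aq/(q−p)}}`,
`∫_s^∞ x^{−q/p} (log x)^{aq/p} dx ≤ 2 (p/(q−p)) (log s)^{aq/p} s^{1−q/p}`. -/
theorem stmt16 (p q a : ℝ) (hp : 0 < p) (hpq : p < q) (ha : 0 ≤ a)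
    (s : ℝ) (hs3 : 3 ≤ s) (hse : Real.exp (2 * a * q / (q - p)) ≤ s) :
    (∫ x in Set.Ioi s, x ^ (-(q / p)) * (Real.log x) ^ (a * q / p)) ≤
      2 * (p / (q - p)) * (Real.log s) ^ (a * q / p) * s ^ (1 - q / p) :=
  stmt16_general p q a hp hpq s hs3 hse
end

section
/- Fix d ∈ ℕ, α ∈ (0,∞)^d with h(α) = min_j α_j, and constants c₂ > 0. Suppose ε ∈ (0, 1/e) and s ∈ ℕ satisfy s ≤ (c₂/(p(α)−1)!) ε^{−1/h(α)} (log(1/ε))^{p(α)−1} < s + 1, where p(α) is the number of minimal coordinates of α. Then ε ≤ (h(α)^{p(α)−1} c₂/(p(α)−1)!)^{h(α)} · s^{−h(α)} · (log(s+1))^{h(α)(p(α)−1)}. -/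
open Real Finset

/-- Key arithmetic step in the proof of the best `s`-term rate in `H^α_mix`: if
`ε ∈ (0, 1/e)` and `s ∈ ℕ` satisfy the two-sided bound
`s ≤ (c₂/(p−1)!) ε^{−1/h} (log(1/ε))^{p−1} < s + 1` (with `h = min_j α_j`, `p` the number
of minimal coordinates and `c₂ > (p−1)!`), then
`ε ≤ (h^{p−1} c₂/(p−1)!)^h s^{−h} (log(s+1))^{h(p−1)}`. -/
theorem stmt17 (d : ℕ) (hd : 0 < d) (α : Fin d → ℝ) (hα : ∀ j, 0 < α j)
    (h : ℝ) (hle : ∀ j, h ≤ α j) (hmem : ∃ j, α j = h)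
    (p : ℕ) (hp : p = (Finset.univ.filter (fun j => α j = h)).card)
    (c₂ : ℝ) (hc₂ : 0 < c₂) (hc₂' : ((p - 1).factorial : ℝ) < c₂)
    (ε : ℝ) (hε0 : 0 < ε) (hε1 : ε < 1 / Real.exp 1)
    (s : ℕ)
    (hs1 : (s : ℝ) ≤ c₂ / ((p - 1).factorial : ℝ) * ε ^ (-(1 / h)) *
      (Real.log (1 / ε)) ^ (p - 1))
    (hs2 : c₂ / ((p - 1).factorial : ℝ) * ε ^ (-(1 / h)) *
      (Real.log (1 / ε)) ^ (p - 1) < (s : ℝ) + 1) :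
    ε ≤ (h ^ (p - 1) * c₂ / ((p - 1).factorial : ℝ)) ^ h * (s : ℝ) ^ (-h) *
      (Real.log ((s : ℝ) + 1)) ^ (h * ((p : ℝ) - 1)) := by
  obtain ⟨j, hj⟩ := hmem
  have hh : 0 < h := hj ▸ hα j
  have hp1 : 1 ≤ p := by
    rw [hp]
    refine Finset.card_pos.mpr ⟨j, ?_⟩
    simp [hj]
  have hF : (0:ℝ) < ((p-1).factorial : ℝ) := by positivity
  set F : ℝ := ((p-1).factorial : ℝ) with hFdef
  set C : ℝ := c₂ / F with hCdef
  have hC : 1 < C := (one_lt_div hF).mpr hc₂'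
  have hC0 : 0 < C := lt_trans one_pos hC
  set L : ℝ := Real.log (1/ε) with hLdef
  have hε1' : ε * Real.exp 1 < 1 := (lt_div_iff₀ (Real.exp_pos 1)).mp hε1
  have hεlt1 : ε < 1 := by nlinarith [Real.exp_one_gt_d9]
  have hL : 1 < L := by
    rw [hLdef, Real.lt_log_iff_exp_lt (by positivity), lt_div_iff₀ hε0, mul_comm]
    exact hε1'
  set A : ℝ := ε ^ (-(1/h)) with hA
  have hA0 : 0 < A := Real.rpow_pos_of_pos hε0 _
  have hA1 : 1 < A := by
    rw [hA, Real.one_lt_rpow_iff_of_pos hε0]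
    exact Or.inr ⟨hεlt1, neg_neg_iff_pos.mpr (by positivity)⟩
  have hLn : 1 ≤ L ^ (p-1) := one_le_pow₀ hL.le
  have hCA : (1:ℝ) < C * A := by nlinarith
  have hbig : (1:ℝ) < C * A * L^(p-1) := by nlinarith
  have hs0 : 1 ≤ s := by
    by_contra hcon
    have hs00 : s = 0 := by omega
    rw [hs00] at hs2
    norm_num at hs2
    linarith
  have hs0R : (1:ℝ) ≤ (s:ℝ) := by exact_mod_cast hs0
  have hsp : (0:ℝ) < (s:ℝ) := by linarith
  set t := Real.log ((s:ℝ)+1) with htdef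
  have ht0 : 0 < t := Real.log_pos (by linarith)
  have hAs : A < (s:ℝ) + 1 := by
    have h1 : (1:ℝ) ≤ C * L^(p-1) := by nlinarith
    nlinarith [mul_nonneg hA0.le (sub_nonneg.mpr h1)]
  have hLε : L = -Real.log ε := by rw [hLdef, one_div, Real.log_inv]
  have ht : L < h * t := by
    have hlog := Real.log_lt_log hA0 hAs
    rw [hA, Real.log_rpow hε0] at hlog
    have h2 : (-Real.log ε) / h < t := by
      rw [(by ring : (-Real.log ε)/h = -(1/h) * Real.log ε)]
      exact hlog
    have h3 := (div_lt_iff₀ hh).mp h2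
    rw [hLε]; linarith
  have hL0 : (0:ℝ) ≤ L := by linarith
  have hεh : ε ^ (1/h) ≤ C * L^(p-1) / s := by
    rw [le_div_iff₀ hsp]
    have hAinv : A = (ε ^ (1/h))⁻¹ := Real.rpow_neg hε0.le _
    rw [hAinv] at hs1
    have hε' : 0 < ε^(1/h) := Real.rpow_pos_of_pos hε0 _
    calc ε^(1/h) * s ≤ ε^(1/h) * (C * (ε^(1/h))⁻¹ * L^(p-1)) :=
          mul_le_mul_of_nonneg_left hs1 hε'.le
      _ = C * L^(p-1) := by field_simp
  have key : ε ≤ (C * L^(p-1) / s)^h := by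
    have heq : ε = (ε^(1/h))^h := by
      rw [← Real.rpow_mul hε0.le, one_div_mul_cancel hh.ne', Real.rpow_one]
    rw [heq]
    exact Real.rpow_le_rpow (Real.rpow_nonneg hε0.le _) hεh hh.le
  have key2 : (C * L^(p-1)/s)^h ≤ (C * (h*t)^(p-1)/(s:ℝ))^h := by
    apply Real.rpow_le_rpow (by positivity) ?_ hh.le
    gcongr <;> first | exact hC0.le | exact hL0 | exact ht.le
  have keyeq : (C * (h*t)^(p-1)/(s:ℝ))^h
      = (h^(p-1) * c₂ / F) ^ h * (s:ℝ)^(-h) * t^(h*((p:ℝ)-1)) := by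
    have h1 : C * (h*t)^(p-1)/(s:ℝ) = (h^(p-1)*C) * t^(p-1) * ((s:ℝ))⁻¹ := by
      rw [mul_pow]; ring
    rw [h1, Real.mul_rpow (by positivity) (by positivity),
      Real.mul_rpow (by positivity) (by positivity)]
    have h2 : (h^(p-1)*C)^h = (h^(p-1) * c₂ / F)^h := by
      rw [hCdef]; ring_nf
    have h3 : (t^(p-1))^h = t^(h*((p:ℝ)-1)) := by
      rw [← Real.rpow_natCast t (p-1), ← Real.rpow_mul ht0.le]
      congr 1
      rw [Nat.cast_sub hp1]
      push_cast
      ring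
    have h4 : ((s:ℝ)⁻¹)^h = (s:ℝ)^(-h) := by
      rw [Real.inv_rpow (by positivity), ← Real.rpow_neg (by positivity)]
    rw [h2, h3, h4]; ring
  linarith [keyeq ▸ key2, key]
end

section
/- Let α ∈ (0,∞)^d with h(α) = min_j α_j > 1/2, r ≥ 2, and let Λ = { n ∈ ℤ^d : ∏_{j=1}^d (1 + |n_j|) ≤ r } be the hyperbolic cross of order r. Then for every f ∈ H^α_mix(𝕋^d) with Fourier coefficients c = (f̂_n), the tail satisfies Σ_{n ∉ Λ} |f̂_n| ≲_{d,α} r^{−h(α)+1/2} (log r)^{(d−1)/2} ‖f‖_{H^α_mix}. -/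
/-!
Write `w(n) = ∏ⱼ (1 + |nⱼ|)` and `s = 2h > 1`. Since `∏ⱼ (1 + |nⱼ|)^(2αⱼ) ≥ w(n)^s`,
Cauchy–Schwarz bounds the tail `∑_{w(n) > r} |cₙ|` by `‖f‖` times the square root of
`∑_{w(n) > r} w(n)^(-s)`, and that sum is `≲ r^(1-s) (1 + log r)^(d-1)`. The latter is proved by
induction on `d`, splitting off one coordinate `m` with `u = 1 + |m|`: the terms with `u > r` give a
one-dimensional tail `≲ r^(1-s)` times the convergent sum over the other coordinates, while for
`u ≤ r` the induction hypothesis at level `r / u` gives `u^(-s) (r/u)^(1-s) = r^(1-s) / u`, and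
`∑_{u ≤ r} 1/u ≲ 1 + log r` supplies the extra logarithm. The tail sums live in `ℝ≥0∞`, where this
Fubini argument needs no summability.
-/

open Real Finset
open scoped ENNReal

lemma mul_rpow_neg_le_rpow_sub_rpow {s x : ℝ} (hs : 1 < s) (hx : 0 < x) :
    (s - 1) * (x + 1) ^ (-s) ≤ x ^ (1 - s) - (x + 1) ^ (1 - s) := by
  obtain ⟨c, ⟨hxc, hcx⟩, hc⟩ := exists_deriv_eq_slope (fun t : ℝ => t ^ (1 - s))
    (lt_add_one x)
    ((continuousOn_id.rpow_const fun t ht => Or.inl (hx.trans_le ht.1).ne'))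
    (fun t ht =>
      (Real.differentiableAt_rpow_const_of_ne _ (hx.trans ht.1).ne').differentiableWithinAt)
  rw [Real.deriv_rpow_const, add_sub_cancel_left, div_one, sub_sub_cancel_left] at hc
  have hc0 : 0 < c := hx.trans hxc
  have : (x + 1) ^ (-s) ≤ c ^ (-s) := rpow_le_rpow_of_nonpos hc0 hcx.le (by linarith)
  nlinarith

/-- Telescoping against `max k (r/2) ^ (1 - s)`, which agrees with `k ^ (1 - s)` on the tail. -/
lemma sum_range_tail_rpow_neg_le {s r : ℝ} (hs : 1 < s) (hr : 1 ≤ r) (N : ℕ) :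
    ∑ k ∈ range N, (if r < (k : ℝ) + 1 then ((k : ℝ) + 1) ^ (-s) else 0) ≤
      (s - 1)⁻¹ * 2 ^ (s - 1) * r ^ (1 - s) := by
  set A : ℕ → ℝ := fun k => max (k : ℝ) (r / 2) ^ (1 - s)
  have hA : ∀ k, 0 ≤ A k := fun k => by positivity
  have hterm : ∀ k : ℕ, (if r < (k : ℝ) + 1 then ((k : ℝ) + 1) ^ (-s) else 0) ≤
      (s - 1)⁻¹ * (A k - A (k + 1)) := by
    intro k
    split_ifs with hk
    · have hk' : r / 2 ≤ k := by
        rcases Nat.eq_zero_or_pos k with rfl | hk0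
        · push_cast at hk; linarith
        · have : (1 : ℝ) ≤ k := by exact_mod_cast hk0
          linarith
      simp only [A, Nat.cast_add_one, max_eq_left hk',
        max_eq_left (hk'.trans (le_add_of_nonneg_right zero_le_one))]
      rw [le_inv_mul_iff₀ (by linarith)]
      exact mul_rpow_neg_le_rpow_sub_rpow hs (by linarith)
    · refine mul_nonneg (inv_nonneg.2 (by linarith)) (sub_nonneg.2 ?_)
      refine rpow_le_rpow_of_nonpos (by positivity) (max_le_max_right _ ?_) (by linarith)
      push_cast; linarith
  calc _ ≤ ∑ k ∈ range N, (s - 1)⁻¹ * (A k - A (k + 1)) := sum_le_sum fun k _ => hterm k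
    _ = (s - 1)⁻¹ * (A 0 - A N) := by rw [← mul_sum, sum_range_sub']
    _ ≤ (s - 1)⁻¹ * A 0 :=
        mul_le_mul_of_nonneg_left (sub_le_self _ (hA N)) (inv_nonneg.2 (by linarith))
    _ = (s - 1)⁻¹ * 2 ^ (s - 1) * r ^ (1 - s) := by
        have h2 : (r / 2) ^ (1 - s) = 2 ^ (s - 1) * r ^ (1 - s) := by
          rw [div_rpow (by linarith) zero_le_two, div_eq_mul_inv, ← rpow_neg zero_le_two, neg_sub,
            mul_comm]
        simp [A, max_eq_right (by linarith : (0:ℝ) ≤ r / 2), h2, mul_assoc]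

lemma sum_range_harmonic_le_one_add_log {r : ℝ} (hr : 1 ≤ r) (N : ℕ) :
    ∑ k ∈ range N, (if (k : ℝ) + 1 ≤ r then ((k : ℝ) + 1)⁻¹ else 0) ≤ 1 + log r := by
  rw [← sum_filter]
  calc _ ≤ ∑ k ∈ range ⌊r⌋₊, ((k : ℝ) + 1)⁻¹ := by
        refine sum_le_sum_of_subset_of_nonneg (fun k hk => ?_) fun k _ _ => by positivity
        rw [mem_filter] at hk
        rw [mem_range, ← Nat.add_one_le_iff]
        exact Nat.le_floor (by exact_mod_cast hk.2)
    _ = harmonic ⌊r⌋₊ := by simp [harmonic]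
    _ ≤ 1 + log ⌊r⌋₊ := harmonic_le_one_add_log _
    _ ≤ 1 + log r := by
        gcongr
        · exact_mod_cast Nat.floor_pos.2 hr
        · exact Nat.floor_le (by linarith)

lemma rpow_neg_mul_div_rpow {u r : ℝ} (hu : 0 < u) (hr : 0 < r) (s : ℝ) :
    u ^ (-s) * (r / u) ^ (1 - s) = r ^ (1 - s) * u⁻¹ := by
  rw [div_rpow hr.le hu.le, mul_div_left_comm, ← rpow_sub hu, show -s - (1 - s) = -1 by ring,
    rpow_neg_one]

lemma one_add_log_le_mul_log {r : ℝ} (hr : 2 ≤ r) : 1 + log r ≤ (1 + (log 2)⁻¹) * log r := by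
  have h2 : 0 < log 2 := log_pos one_lt_two
  rw [add_mul, one_mul, add_comm, inv_mul_eq_div]
  gcongr
  exact (one_le_div h2).2 (log_le_log two_pos hr)

lemma sqrt_mul_rpow_mul_one_add_log_pow_le {B s r : ℝ} (hB : 0 ≤ B) (hr : 2 ≤ r) (d : ℕ) :
    √(B * r ^ (1 - 2 * s) * (1 + log r) ^ d) ≤
      √(B * (1 + (log 2)⁻¹) ^ d) * r ^ (-s + 1 / 2) * log r ^ ((d : ℝ) / 2) := by
  have hr0 : 0 < r := by linarith
  have hlog : 0 ≤ log r := log_nonneg (by linarith)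
  calc _ ≤ √(B * (1 + (log 2)⁻¹) ^ d * (r ^ (1 - 2 * s) * log r ^ d)) := by
        rw [show B * (1 + (log 2)⁻¹) ^ d * (r ^ (1 - 2 * s) * log r ^ d) =
          B * r ^ (1 - 2 * s) * ((1 + (log 2)⁻¹) * log r) ^ d by rw [mul_pow]; ring]
        gcongr
        exact one_add_log_le_mul_log hr
    _ = _ := by
        rw [sqrt_mul (by positivity), sqrt_mul (rpow_nonneg hr0.le _), sqrt_eq_rpow (r ^ _),
          ← rpow_mul hr0.le, sqrt_eq_rpow (log r ^ d), ← rpow_natCast (log r) d, ← rpow_mul hlog]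
        ring_nf

lemma summable_sqrt_mul_and_tsum_le {ι : Type*} {a b : ι → ℝ} (ha0 : ∀ i, 0 ≤ a i)
    (hb0 : ∀ i, 0 ≤ b i) (ha : Summable a) (hb : Summable b) :
    Summable (fun i => √(a i * b i)) ∧ ∑' i, √(a i * b i) ≤ √(∑' i, a i) * √(∑' i, b i) := by
  have hsq : ∀ {x : ℝ}, 0 ≤ x → √x ^ (2 : ℝ) = x := fun hx => by
    rw [rpow_two, sq_sqrt hx]
  have := Real.summable_and_inner_le_Lp_mul_Lq_tsum_of_nonneg .two_two
    (fun i => sqrt_nonneg (a i)) (fun i => sqrt_nonneg (b i))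
    (by simpa only [hsq (ha0 _)] using ha) (by simpa only [hsq (hb0 _)] using hb)
  simp only [← sqrt_mul (ha0 _), hsq (ha0 _), hsq (hb0 _)] at this
  rwa [sqrt_eq_rpow, sqrt_eq_rpow]

lemma summable_and_tsum_subtype_le_sqrt_mul_sqrt {ι : Type*} {W a : ι → ℝ} (hW : ∀ i, 0 < W i)
    (ha : ∀ i, 0 ≤ a i) (haW : Summable fun i => W i * a i ^ 2) {S : Set ι} {M : ℝ}
    (hS : Summable fun i : S => (W i)⁻¹) (hSM : ∑' i : S, (W i)⁻¹ ≤ M) :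
    Summable (fun i : S => a i) ∧ ∑' i : S, a i ≤ √M * √(∑' i, W i * a i ^ 2) := by
  have hWa : ∀ i, 0 ≤ W i * a i ^ 2 := fun i => mul_nonneg (hW i).le (sq_nonneg _)
  have hsqrt : ∀ i, √((W i)⁻¹ * (W i * a i ^ 2)) = a i := fun i => by
    rw [inv_mul_cancel_left₀ (hW i).ne', sqrt_sq (ha i)]
  obtain ⟨hsum, hCS⟩ := summable_sqrt_mul_and_tsum_le (a := fun i : S => (W i)⁻¹)
    (b := fun i : S => W i * a i ^ 2) (fun i => (inv_pos.2 (hW i)).le) (fun i => hWa i) hS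
    (haW.subtype S)
  simp only [hsqrt] at hsum hCS
  refine ⟨hsum, hCS.trans ?_⟩
  gcongr
  exact haW.tsum_subtype_le _ S hWa

lemma ENNReal.tsum_ofReal_le_of_sum_range_le {f : ℕ → ℝ} {c : ℝ} (hf : ∀ k, 0 ≤ f k)
    (h : ∀ N, ∑ k ∈ range N, f k ≤ c) : ∑' k, ENNReal.ofReal (f k) ≤ ENNReal.ofReal c :=
  ENNReal.tsum_le_of_sum_range_le fun N => by
    rw [← ENNReal.ofReal_sum_of_nonneg fun k _ => hf k]
    exact ENNReal.ofReal_le_ofReal (h N)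

lemma ENNReal.summable_and_tsum_le_of_tsum_ofReal_le {ι : Type*} {f : ι → ℝ} {M : ℝ}
    (hf : ∀ i, 0 ≤ f i) (hM : 0 ≤ M) (h : ∑' i, ENNReal.ofReal (f i) ≤ ENNReal.ofReal M) :
    Summable f ∧ ∑' i, f i ≤ M := by
  have hsum : Summable f := by
    simpa only [ENNReal.toReal_ofReal (hf _)] using
      ENNReal.summable_toReal (ne_top_of_le_ne_top ENNReal.ofReal_ne_top h)
  refine ⟨hsum, ?_⟩
  rw [← ENNReal.ofReal_tsum_of_nonneg hf hsum] at h
  exact (ENNReal.ofReal_le_ofReal_iff hM).1 h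

lemma ENNReal.ofReal_mul_rpow {a b : ℝ} (ha : 0 ≤ a) (hb : 0 ≤ b) (t : ℝ) :
    ENNReal.ofReal ((a * b) ^ t) = ENNReal.ofReal (a ^ t) * ENNReal.ofReal (b ^ t) := by
  rw [mul_rpow ha hb, ENNReal.ofReal_mul (by positivity)]

lemma ENNReal.tsum_int_natAbs_le (g : ℕ → ℝ≥0∞) : ∑' m : ℤ, g m.natAbs ≤ 2 * ∑' k, g k := by
  rw [tsum_of_nat_of_neg_add_one ENNReal.summable ENNReal.summable, two_mul]
  refine add_le_add (le_of_eq (by simp)) (le_of_eq_of_le (tsum_congr fun n => ?_)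
    (ENNReal.tsum_comp_le_tsum_of_injective (add_left_injective 1) g))
  congr 1

lemma ENNReal.tsum_int_one_add_abs_le (F : ℝ → ℝ≥0∞) :
    ∑' m : ℤ, F (1 + |(m : ℝ)|) ≤ 2 * ∑' k : ℕ, F ((k : ℝ) + 1) := by
  have h : ∀ m : ℤ, 1 + |(m : ℝ)| = (m.natAbs : ℝ) + 1 := fun m => by
    rw [Nat.cast_natAbs, Int.cast_abs, add_comm]
  simpa only [h] using ENNReal.tsum_int_natAbs_le fun k => F ((k : ℝ) + 1)

lemma tsum_fin_cons {M α : Type*} [AddCommMonoid M] [TopologicalSpace M] {d : ℕ}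
    (F : (Fin (d + 1) → α) → M) : ∑' n, F n = ∑' p : α × (Fin d → α), F (Fin.cons p.1 p.2) :=
  ((Fin.consEquiv fun _ => α).tsum_eq F).symm

lemma tsum_subtype_not_le {X : Type*} (w : X → ℝ) (r : ℝ) (f : X → ℝ≥0∞) :
    ∑' x : {x // ¬ w x ≤ r}, f x = ∑' x, if r < w x then f x else 0 :=
  (tsum_subtype {x | ¬ w x ≤ r} f).trans (tsum_congr fun x => by simp [Set.indicator_apply])

noncomputable def tailSum {X : Type*} (w : X → ℝ) (s r : ℝ) : ℝ≥0∞ :=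
  ∑' x, if r < w x then ENNReal.ofReal (w x ^ (-s)) else 0

lemma tailSum_mul_le {Y X : Type*} {u : Y → ℝ} {v : X → ℝ} (hu : ∀ y, 0 < u y)
    (hv : ∀ x, 0 ≤ v x) (s r : ℝ) :
    tailSum (fun p : Y × X => u p.1 * v p.2) s r ≤
      tailSum u s r * ∑' x, ENNReal.ofReal (v x ^ (-s)) +
        ∑' y, if u y ≤ r then ENNReal.ofReal (u y ^ (-s)) * tailSum v s (r / u y) else 0 := by
  have hmul : ∀ y x, ENNReal.ofReal ((u y * v x) ^ (-s)) =
      ENNReal.ofReal (u y ^ (-s)) * ENNReal.ofReal (v x ^ (-s)) := fun y x =>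
    ENNReal.ofReal_mul_rpow (hu y).le (hv x) _
  rw [tailSum, ENNReal.tsum_prod', tailSum, ← ENNReal.tsum_mul_right, ← ENNReal.tsum_add]
  refine ENNReal.tsum_le_tsum fun y => ?_
  by_cases hy : r < u y
  · rw [if_pos hy, if_neg (not_le.2 hy), add_zero, ← ENNReal.tsum_mul_left]
    refine ENNReal.tsum_le_tsum fun x => ?_
    rw [← hmul]
    split_ifs <;> simp
  · rw [if_neg hy, if_pos (not_lt.1 hy), zero_mul, zero_add, tailSum, ← ENNReal.tsum_mul_left]
    refine ENNReal.tsum_le_tsum fun x => ?_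
    simp only [div_lt_iff₀ (hu y), mul_comm (v x), hmul, mul_ite, mul_zero, le_refl]

lemma tailSum_one_add_abs_le {s r : ℝ} (hs : 1 < s) (hr : 1 ≤ r) :
    tailSum (fun m : ℤ => 1 + |(m : ℝ)|) s r ≤
      ENNReal.ofReal (2 * (s - 1)⁻¹ * 2 ^ (s - 1) * r ^ (1 - s)) := by
  refine (ENNReal.tsum_int_one_add_abs_le fun x =>
    if r < x then ENNReal.ofReal (x ^ (-s)) else 0).trans ?_
  rw [mul_assoc, mul_assoc, ENNReal.ofReal_mul zero_le_two, ENNReal.ofReal_ofNat, ← mul_assoc]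
  gcongr
  simpa only [apply_ite ENNReal.ofReal, ENNReal.ofReal_zero] using
    ENNReal.tsum_ofReal_le_of_sum_range_le (fun k => by split_ifs <;> positivity)
      (sum_range_tail_rpow_neg_le hs hr)

lemma tsum_inv_one_add_abs_le {r : ℝ} (hr : 1 ≤ r) :
    ∑' m : ℤ, (if 1 + |(m : ℝ)| ≤ r then ENNReal.ofReal (1 + |(m : ℝ)|)⁻¹ else 0) ≤
      ENNReal.ofReal (2 * (1 + log r)) := by
  refine (ENNReal.tsum_int_one_add_abs_le fun x =>
    if x ≤ r then ENNReal.ofReal x⁻¹ else 0).trans ?_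
  rw [ENNReal.ofReal_mul zero_le_two, ENNReal.ofReal_ofNat]
  gcongr
  simpa only [apply_ite ENNReal.ofReal, ENNReal.ofReal_zero] using
    ENNReal.tsum_ofReal_le_of_sum_range_le (fun k => by split_ifs <;> positivity)
      (sum_range_harmonic_le_one_add_log hr)

lemma tsum_one_add_abs_rpow_neg_ne_top {s : ℝ} (hs : 1 < s) :
    ∑' m : ℤ, ENNReal.ofReal ((1 + |(m : ℝ)|) ^ (-s)) ≠ ∞ := by
  have hsum : Summable fun k : ℕ => ((k : ℝ) + 1) ^ (-s) := by
    simpa using (summable_nat_add_iff 1).2 (Real.summable_nat_rpow.2 (by linarith : -s < -1))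
  refine ne_top_of_le_ne_top ?_ (ENNReal.tsum_int_one_add_abs_le fun x => ENNReal.ofReal (x ^ (-s)))
  rw [← ENNReal.ofReal_tsum_of_nonneg (fun k => by positivity) hsum]
  exact ENNReal.mul_ne_top ENNReal.ofNat_ne_top ENNReal.ofReal_ne_top

noncomputable def hyperbolicWeight {d : ℕ} (n : Fin d → ℤ) : ℝ := ∏ j, (1 + |(n j : ℝ)|)

lemma one_le_hyperbolicWeight {d : ℕ} (n : Fin d → ℤ) : 1 ≤ hyperbolicWeight n :=
  Finset.one_le_prod fun _ _ => le_add_of_nonneg_right (abs_nonneg _)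

lemma hyperbolicWeight_pos {d : ℕ} (n : Fin d → ℤ) : 0 < hyperbolicWeight n :=
  zero_lt_one.trans_le (one_le_hyperbolicWeight n)

lemma hyperbolicWeight_nonneg {d : ℕ} (n : Fin d → ℤ) : 0 ≤ hyperbolicWeight n :=
  (hyperbolicWeight_pos n).le

lemma hyperbolicWeight_cons {d : ℕ} (m : ℤ) (n : Fin d → ℤ) :
    hyperbolicWeight (Fin.cons m n : Fin (d + 1) → ℤ) = (1 + |(m : ℝ)|) * hyperbolicWeight n := by
  simp [hyperbolicWeight, Fin.prod_univ_succ]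

lemma hyperbolicWeight_rpow_le_prod {d : ℕ} {t : ℝ} {a : Fin d → ℝ} (hta : ∀ j, t ≤ a j)
    (n : Fin d → ℤ) : hyperbolicWeight n ^ t ≤ ∏ j, (1 + |(n j : ℝ)|) ^ a j := by
  rw [hyperbolicWeight, ← Real.finsetProd_rpow _ _ (fun j _ => by positivity)]
  exact prod_le_prod (fun j _ => by positivity) fun j _ =>
    rpow_le_rpow_of_exponent_le (le_add_of_nonneg_right (abs_nonneg _)) (hta j)

lemma tsum_hyperbolicWeight_rpow_neg_ne_top {s : ℝ} (hs : 1 < s) (d : ℕ) :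
    ∑' n : Fin d → ℤ, ENNReal.ofReal (hyperbolicWeight n ^ (-s)) ≠ ∞ := by
  induction d with
  | zero => simp [tsum_fintype]
  | succ d ih =>
    have hmul : ∀ (m : ℤ) (n : Fin d → ℤ),
        ENNReal.ofReal (((1 + |(m : ℝ)|) * hyperbolicWeight n) ^ (-s)) =
          ENNReal.ofReal ((1 + |(m : ℝ)|) ^ (-s)) * ENNReal.ofReal (hyperbolicWeight n ^ (-s)) :=
      fun m n => ENNReal.ofReal_mul_rpow (by positivity) (hyperbolicWeight_nonneg n) _
    simp only [tsum_fin_cons, ENNReal.tsum_prod', hyperbolicWeight_cons, hmul,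
      ENNReal.tsum_mul_left, ENNReal.tsum_mul_right]
    exact ENNReal.mul_ne_top (tsum_one_add_abs_rpow_neg_ne_top hs) ih

lemma tailSum_hyperbolicWeight_fin_one (s r : ℝ) :
    tailSum (hyperbolicWeight : (Fin 1 → ℤ) → ℝ) s r =
      tailSum (fun m : ℤ => 1 + |(m : ℝ)|) s r := by
  rw [tailSum, tailSum, ← (Equiv.funUnique (Fin 1) ℤ).symm.tsum_eq]
  simp [hyperbolicWeight]

lemma tailSum_hyperbolicWeight_fin_succ {d : ℕ} (s r : ℝ) :
    tailSum (hyperbolicWeight : (Fin (d + 1) → ℤ) → ℝ) s r =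
      tailSum (fun p : ℤ × (Fin d → ℤ) => (1 + |(p.1 : ℝ)|) * hyperbolicWeight p.2) s r := by
  simp only [tailSum, tsum_fin_cons, hyperbolicWeight_cons]

lemma ofReal_rpow_neg_mul_tailSum_le {d : ℕ} {s B r u : ℝ} (hB : 0 ≤ B)
    (hBr : ∀ r' : ℝ, 1 ≤ r' → tailSum (hyperbolicWeight : (Fin (d + 1) → ℤ) → ℝ) s r' ≤
      ENNReal.ofReal (B * r' ^ (1 - s) * (1 + log r') ^ d))
    (hu : 1 ≤ u) (hur : u ≤ r) :
    ENNReal.ofReal (u ^ (-s)) * tailSum (hyperbolicWeight : (Fin (d + 1) → ℤ) → ℝ) s (r / u) ≤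
      ENNReal.ofReal (B * r ^ (1 - s) * (1 + log r) ^ d) * ENNReal.ofReal u⁻¹ := by
  have hu0 : 0 < u := by linarith
  have hr0 : 0 < r := by linarith
  have hlog : 0 ≤ log (r / u) := log_nonneg ((one_le_div hu0).2 hur)
  have hL : 0 ≤ 1 + log r := by linarith [log_nonneg (hu.trans hur)]
  calc _ ≤ ENNReal.ofReal (u ^ (-s)) *
          ENNReal.ofReal (B * (r / u) ^ (1 - s) * (1 + log r) ^ d) := by
        gcongr
        refine (hBr _ ((one_le_div hu0).2 hur)).trans (ENNReal.ofReal_le_ofReal ?_)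
        have : log (r / u) ≤ log r := log_le_log (div_pos hr0 hu0) (div_le_self hr0.le hu)
        gcongr
    _ = _ := by
        rw [← ENNReal.ofReal_mul (rpow_nonneg hu0.le _),
          ← ENNReal.ofReal_mul
            (mul_nonneg (mul_nonneg hB (rpow_nonneg hr0.le _)) (pow_nonneg hL d))]
        congr 1
        rw [show u ^ (-s) * (B * (r / u) ^ (1 - s) * (1 + log r) ^ d) =
          B * (1 + log r) ^ d * (u ^ (-s) * (r / u) ^ (1 - s)) by ring,
          rpow_neg_mul_div_rpow hu0 hr0]
        ring

lemma tsum_ofReal_rpow_neg_mul_tailSum_le {d : ℕ} {s B r : ℝ} (hB : 0 ≤ B)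
    (hBr : ∀ r' : ℝ, 1 ≤ r' → tailSum (hyperbolicWeight : (Fin (d + 1) → ℤ) → ℝ) s r' ≤
      ENNReal.ofReal (B * r' ^ (1 - s) * (1 + log r') ^ d))
    (hr : 1 ≤ r) :
    ∑' m : ℤ, (if 1 + |(m : ℝ)| ≤ r then ENNReal.ofReal ((1 + |(m : ℝ)|) ^ (-s)) *
        tailSum (hyperbolicWeight : (Fin (d + 1) → ℤ) → ℝ) s (r / (1 + |(m : ℝ)|)) else 0) ≤
      ENNReal.ofReal (B * r ^ (1 - s) * (1 + log r) ^ (d + 1) * 2) := by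
  have hL : 0 ≤ 1 + log r := by linarith [log_nonneg hr]
  calc _ ≤ ∑' m : ℤ, ENNReal.ofReal (B * r ^ (1 - s) * (1 + log r) ^ d) *
        (if 1 + |(m : ℝ)| ≤ r then ENNReal.ofReal (1 + |(m : ℝ)|)⁻¹ else 0) := by
        refine ENNReal.tsum_le_tsum fun m => ?_
        split_ifs with hm
        · exact ofReal_rpow_neg_mul_tailSum_le hB hBr (le_add_of_nonneg_right (abs_nonneg _)) hm
        · simp
    _ ≤ ENNReal.ofReal (B * r ^ (1 - s) * (1 + log r) ^ d) * ENNReal.ofReal (2 * (1 + log r)) := by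
        rw [ENNReal.tsum_mul_left]
        gcongr
        exact tsum_inv_one_add_abs_le hr
    _ = _ := by
        rw [← ENNReal.ofReal_mul (mul_nonneg (by positivity) (pow_nonneg hL d))]
        ring_nf

theorem exists_tailSum_hyperbolicWeight_le {s : ℝ} (hs : 1 < s) (d : ℕ) :
    ∃ B : ℝ, 0 < B ∧ ∀ r : ℝ, 1 ≤ r →
      tailSum (hyperbolicWeight : (Fin (d + 1) → ℤ) → ℝ) s r ≤
        ENNReal.ofReal (B * r ^ (1 - s) * (1 + log r) ^ d) := by
  have hs1 : 0 < s - 1 := by linarith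
  set C := 2 * (s - 1)⁻¹ * 2 ^ (s - 1)
  induction d with
  | zero =>
    refine ⟨C, by positivity, fun r hr => ?_⟩
    simpa [tailSum_hyperbolicWeight_fin_one] using tailSum_one_add_abs_le hs hr
  | succ d ih =>
    obtain ⟨B, hB, hBr⟩ := ih
    set T := ∑' n : Fin (d + 1) → ℤ, ENNReal.ofReal (hyperbolicWeight n ^ (-s))
    have hT : ENNReal.ofReal T.toReal = T :=
      ENNReal.ofReal_toReal (tsum_hyperbolicWeight_rpow_neg_ne_top hs _)
    refine ⟨C * T.toReal + 2 * B, by positivity, fun r hr => ?_⟩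
    set L := 1 + log r
    have hL : 1 ≤ L := le_add_of_nonneg_right (log_nonneg hr)
    calc _ = tailSum (fun p : ℤ × (Fin (d + 1) → ℤ) =>
            (1 + |(p.1 : ℝ)|) * hyperbolicWeight p.2) s r := tailSum_hyperbolicWeight_fin_succ s r
      _ ≤ ENNReal.ofReal (C * r ^ (1 - s)) * ENNReal.ofReal T.toReal +
            ENNReal.ofReal (B * r ^ (1 - s) * L ^ (d + 1) * 2) := by
        rw [hT]
        exact (tailSum_mul_le (fun m => by positivity) hyperbolicWeight_nonneg s r).trans
          (add_le_add (by gcongr; exact tailSum_one_add_abs_le hs hr)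
            (tsum_ofReal_rpow_neg_mul_tailSum_le hB.le hBr hr))
      _ ≤ _ := by
        rw [← ENNReal.ofReal_mul (by positivity),
          ← ENNReal.ofReal_add (by positivity) (by positivity)]
        refine ENNReal.ofReal_le_ofReal ?_
        have : 1 ≤ L ^ (d + 1) := one_le_pow₀ hL
        have : 0 ≤ C * r ^ (1 - s) * T.toReal := by positivity
        nlinarith

lemma summable_and_tsum_inv_prod_rpow_le {d : ℕ} {α : Fin d → ℝ} {t r M : ℝ}
    (hle : ∀ j, t ≤ α j) (hM : 0 ≤ M)
    (htail : tailSum (hyperbolicWeight : (Fin d → ℤ) → ℝ) t r ≤ ENNReal.ofReal M) :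
    Summable (fun n : {n | ¬ hyperbolicWeight n ≤ r} => (∏ j, (1 + |(n.1 j : ℝ)|) ^ α j)⁻¹) ∧
      ∑' n : {n | ¬ hyperbolicWeight n ≤ r}, (∏ j, (1 + |(n.1 j : ℝ)|) ^ α j)⁻¹ ≤ M := by
  refine ENNReal.summable_and_tsum_le_of_tsum_ofReal_le (fun n => by positivity) hM ?_
  calc _ ≤ ∑' n : {n | ¬ hyperbolicWeight n ≤ r}, ENNReal.ofReal (hyperbolicWeight n.1 ^ (-t)) :=
        ENNReal.tsum_le_tsum fun n => ENNReal.ofReal_le_ofReal <| by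
          rw [rpow_neg (hyperbolicWeight_nonneg _)]
          exact inv_anti₀ (rpow_pos_of_pos (hyperbolicWeight_pos _) _)
            (hyperbolicWeight_rpow_le_prod hle n.1)
    _ = tailSum hyperbolicWeight t r :=
        tsum_subtype_not_le hyperbolicWeight r fun n => ENNReal.ofReal (hyperbolicWeight n ^ (-t))
    _ ≤ _ := htail

theorem stmt19_general (d : ℕ) (hd : 0 < d) (α : Fin d → ℝ)
    (h : ℝ) (hle : ∀ j, h ≤ α j) (hh : 1 / 2 < h) :
    ∃ C : ℝ, 0 < C ∧ ∀ r : ℝ, 2 ≤ r → ∀ c : (Fin d → ℤ) → ℂ,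
      Summable (fun n => (∏ j, (1 + |(n j : ℝ)|) ^ (2 * α j)) * ‖c n‖ ^ 2) →
      Summable (fun n : {n : (Fin d → ℤ) // ¬ (∏ j, (1 + |(n j : ℝ)|)) ≤ r} =>
        ‖c n.1‖) ∧
      (∑' n : {n : (Fin d → ℤ) // ¬ (∏ j, (1 + |(n j : ℝ)|)) ≤ r}, ‖c n.1‖) ≤
        C * r ^ (-h + 1 / 2) * (Real.log r) ^ (((d : ℝ) - 1) / 2) *
          Real.sqrt (∑' n, (∏ j, (1 + |(n j : ℝ)|) ^ (2 * α j)) * ‖c n‖ ^ 2) := by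
  obtain ⟨d, rfl⟩ := Nat.exists_eq_add_one_of_ne_zero hd.ne'
  obtain ⟨B, hB, htail⟩ := exists_tailSum_hyperbolicWeight_le (s := 2 * h) (by linarith) d
  refine ⟨√(B * (1 + (log 2)⁻¹) ^ d), by positivity, fun r hr c hc => ?_⟩
  have hM : 0 ≤ B * r ^ (1 - 2 * h) * (1 + log r) ^ d := by
    have := log_nonneg (by linarith : (1 : ℝ) ≤ r)
    positivity
  obtain ⟨hS, hSM⟩ := summable_and_tsum_inv_prod_rpow_le (α := fun j => 2 * α j)
    (fun j => by linarith [hle j]) hM (htail r (by linarith))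
  obtain ⟨hsum, hbound⟩ := summable_and_tsum_subtype_le_sqrt_mul_sqrt
    (fun n => prod_pos fun j _ => by positivity) (fun n => norm_nonneg (c n)) hc hS hSM
  refine ⟨hsum, hbound.trans ?_⟩
  rw [show (((d + 1 : ℕ) : ℝ) - 1) / 2 = (d : ℝ) / 2 by push_cast; ring]
  gcongr
  exact sqrt_mul_rpow_mul_one_add_log_pow_le hB.le hr d

/-- Hyperbolic cross tail bound in `H^α_mix`: with `h = min_j α_j > 1/2` and
`Λ = {n : ∏_j (1+|n_j|) ≤ r}` the hyperbolic cross of order `r ≥ 2`, every `f ∈ H^α_mix`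
(given through its Fourier coefficients `c`) satisfies
`Σ_{n∉Λ} |c_n| ≲_{d,α} r^{−h+1/2} (log r)^{(d−1)/2} ‖f‖_{H^α_mix}`. -/
theorem stmt19 (d : ℕ) (hd : 0 < d) (α : Fin d → ℝ)
    (h : ℝ) (hle : ∀ j, h ≤ α j) (hmem : ∃ j, α j = h) (hh : 1 / 2 < h) :
    ∃ C : ℝ, 0 < C ∧ ∀ r : ℝ, 2 ≤ r → ∀ c : (Fin d → ℤ) → ℂ,
      Summable (fun n => (∏ j, (1 + |(n j : ℝ)|) ^ (2 * α j)) * ‖c n‖ ^ 2) →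
      Summable (fun n : {n : (Fin d → ℤ) // ¬ (∏ j, (1 + |(n j : ℝ)|)) ≤ r} =>
        ‖c n.1‖) ∧
      (∑' n : {n : (Fin d → ℤ) // ¬ (∏ j, (1 + |(n j : ℝ)|)) ≤ r}, ‖c n.1‖) ≤
        C * r ^ (-h + 1 / 2) * (Real.log r) ^ (((d : ℝ) - 1) / 2) *
          Real.sqrt (∑' n, (∏ j, (1 + |(n j : ℝ)|) ^ (2 * α j)) * ‖c n‖ ^ 2) :=
  stmt19_general d hd α h hle hh
end
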